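/- arXiv:1909.04471 — 5 statements merged into one kernel-verified Lean document; each statement's English description precedes it below -/
import Mathlib

section
/- Let n ≥ 1 be an integer. If f ∈ A_n satisfies |z·f''(z)| < (n+1)/2 for all z ∈ 𝔻, then f ∈ Ω_n. -/
open Complex Metric

/-- The open unit disc in `ℂ`. -/
def unitDisc : Set ℂ := Metric.ball 0 1

/-- `f ∈ 𝒜ₙ`: `f` is analytic on the unit disc with power series
`f(z) = z + ∑_{k=n+1}^∞ a_k z^k`. -/
def MemA (n : ℕ) (f : ℂ → ℂ) : Prop :=
  DifferentiableOn ℂ f unitDisc ∧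
    ∃ a : ℕ → ℂ, ∀ z ∈ unitDisc, f z = z + ∑' k : ℕ, a k * z ^ (n + 1 + k)

/-- `f ∈ Ωₙ`: `f ∈ 𝒜ₙ` and `|z f'(z) - f(z)| < 1/2` on the unit disc. -/
def MemOmega (n : ℕ) (f : ℂ → ℂ) : Prop :=
  MemA n f ∧ ∀ z ∈ unitDisc, ‖z * deriv f z - f z‖ < 1 / 2

/-!
Put `G z = z * f' z - f z`. Then `G' z = z * f'' z`, and `G` vanishes to order `n + 1` at `0`
because `f z - z` does. Hence `z * f''` vanishes to order `n`, and the maximum principle applied to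
`z * f'' z / zⁿ` (a Schwarz lemma of order `n`) gives `‖z * f'' z‖ ≤ (n + 1) / 2 * ‖z‖ⁿ`.
Integrating `G'` along the segment `[0, z]` yields `‖G z‖ ≤ ‖z‖ⁿ⁺¹ / 2 < 1 / 2`.
-/

open Filter Set Topology Function

section AnalyticOrder

variable {𝕜 : Type*} [NontriviallyNormedField 𝕜]

theorem hasDerivAt_mul_deriv_sub {f : 𝕜 → 𝕜} {z : 𝕜} (hf : DifferentiableAt 𝕜 f z)
    (hf' : DifferentiableAt 𝕜 (deriv f) z) :
    HasDerivAt (fun w => w * deriv f w - f w) (z * deriv (deriv f) z) z :=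
  (((hasDerivAt_id' z).mul hf'.hasDerivAt).sub hf.hasDerivAt).congr_deriv (by ring)

theorem analyticOrderAt_sub_id_le_mul_deriv_sub [CharZero 𝕜] [CompleteSpace 𝕜] {f : 𝕜 → 𝕜}
    (hf : AnalyticAt 𝕜 f 0) :
    analyticOrderAt (fun z => f z - z) 0 ≤ analyticOrderAt (fun z => z * deriv f z - f z) 0 := by
  set g : 𝕜 → 𝕜 := fun z => f z - z with hg_def
  have hg : AnalyticAt 𝕜 g 0 := hf.sub analyticAt_id
  rcases ne_or_eq (g 0) 0 with hg0 | hg0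
  · simp [analyticOrderAt_eq_zero.2 (Or.inr hg0)]
  have hG : (fun z => z * deriv f z - f z) =ᶠ[𝓝 0] id * deriv g - g := by
    filter_upwards [hf.eventually_analyticAt] with z hz
    have hg' : deriv g z = deriv f z - 1 :=
      (hz.differentiableAt.hasDerivAt.sub (hasDerivAt_id' z)).deriv
    show z * deriv f z - f z = z * deriv g z - g z
    rw [hg', hg_def]
    ring
  have hmul : analyticOrderAt (id * deriv g) 0 = analyticOrderAt g 0 := by
    rw [analyticOrderAt_mul analyticAt_id hg.deriv, analyticOrderAt_id, add_comm,
      hg.analyticOrderAt_deriv_add_one]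
    simp [hg0]
  rw [analyticOrderAt_congr hG]
  have := le_analyticOrderAt_sub (f := id * deriv g) (g := g) (z₀ := 0)
  rwa [hmul, min_self] at this

theorem analyticAt_tsum_mul_pow [CompleteSpace 𝕜] {a : ℕ → 𝕜} {z₀ : 𝕜} (hz₀ : z₀ ≠ 0)
    (hs : Summable fun k => a k * z₀ ^ k) : AnalyticAt 𝕜 (fun z => ∑' k, a k * z ^ k) 0 := by
  set p := FormalMultilinearSeries.ofScalars 𝕜 a
  have hr : (‖z₀‖₊ : ENNReal) ≤ p.radius :=
    p.le_radius_of_tendsto (l := 0) <| by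
      simpa [p, FormalMultilinearSeries.ofScalars_norm] using hs.tendsto_atTop_zero.norm
  have hp : HasFPowerSeriesOnBall p.sum p 0 p.radius :=
    p.hasFPowerSeriesOnBall (lt_of_lt_of_le (by simpa using hz₀) hr)
  convert hp.analyticAt using 1
  funext z
  exact (FormalMultilinearSeries.ofScalars_sum_eq (E := 𝕜) a z).symm

theorem natCast_le_analyticOrderAt_of_eventuallyEq_tsum [CompleteSpace 𝕜] {g : 𝕜 → 𝕜}
    {a : ℕ → 𝕜} {m : ℕ} (hg : ∀ᶠ z in 𝓝 0, g z = ∑' k, a k * z ^ (m + 1 + k)) :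
    ((m + 1 : ℕ) : ℕ∞) ≤ analyticOrderAt g 0 := by
  have hfactor : ∀ z : 𝕜, ∑' k, a k * z ^ (m + 1 + k) = z ^ (m + 1) * ∑' k, a k * z ^ k :=
    fun z => by rw [← tsum_mul_left]; exact tsum_congr fun k => by ring
  by_cases hs : ∃ z₀ ≠ 0, Summable fun k => a k * z₀ ^ k
  · obtain ⟨z₀, hz₀, hs⟩ := hs
    have hsa := analyticAt_tsum_mul_pow hz₀ hs
    have hg' : g =ᶠ[𝓝 0] fun z => z ^ (m + 1) * ∑' k, a k * z ^ k :=
      hg.mono fun z hz => hz.trans (hfactor z)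
    rw [analyticOrderAt_congr hg', natCast_le_analyticOrderAt (by fun_prop)]
    exact ⟨_, hsa, by simp⟩
  · -- the series diverges at every `z ≠ 0`, where `tsum` takes the junk value `0`
    push Not at hs
    refine le_top.trans_eq (analyticOrderAt_eq_top.2 ?_).symm
    filter_upwards [hg] with z hz
    rcases eq_or_ne z 0 with rfl | hz0
    · simp [hz]
    · rw [hz, hfactor, tsum_eq_zero_of_not_summable (hs z hz0), mul_zero]

end AnalyticOrder

theorem exists_analyticOnNhd_eqOn_pow_mul {H : ℂ → ℂ} {U : Set ℂ} {m : ℕ}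
    (hH : AnalyticOnNhd ℂ H U) (h0 : 0 ∈ U) (hm : (m : ℕ∞) ≤ analyticOrderAt H 0) :
    ∃ v : ℂ → ℂ, AnalyticOnNhd ℂ v U ∧ ∀ z ∈ U, H z = z ^ m * v z := by
  obtain ⟨φ, hφ, hHφ⟩ := (natCast_le_analyticOrderAt (hH 0 h0)).1 hm
  simp only [sub_zero, smul_eq_mul] at hHφ
  set v := update (fun z => H z / z ^ m) 0 (φ 0) with hv_def
  have hvφ : v =ᶠ[𝓝 0] φ := by
    filter_upwards [hHφ] with z hz
    rcases eq_or_ne z 0 with rfl | hz0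
    · simp [v]
    · rw [hv_def, update_of_ne hz0, hz, mul_div_cancel_left₀ _ (pow_ne_zero m hz0)]
  refine ⟨v, fun z hz => ?_, fun z hz => ?_⟩
  · rcases eq_or_ne z 0 with rfl | hz0
    · exact hφ.congr hvφ.symm
    · have hv : (fun w => H w / w ^ m) =ᶠ[𝓝 z] v :=
        (eventually_ne_nhds hz0).mono fun w hw => by rw [hv_def, update_of_ne hw]
      exact ((hH z hz).div (analyticAt_id.pow m) (pow_ne_zero m hz0)).congr hv
  · rcases eq_or_ne z 0 with rfl | hz0
    · rw [hHφ.self_of_nhds, hvφ.self_of_nhds]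
    · rw [hv_def, update_of_ne hz0, mul_div_cancel₀ _ (pow_ne_zero m hz0)]

theorem norm_le_of_forall_norm_pow_mul_le {v : ℂ → ℂ} {m : ℕ} {B : ℝ}
    (hv : DifferentiableOn ℂ v (ball 0 1)) (hB : ∀ z ∈ ball (0 : ℂ) 1, ‖z‖ ^ m * ‖v z‖ ≤ B) :
    ∀ z ∈ ball (0 : ℂ) 1, ‖v z‖ ≤ B := by
  intro ζ hζ
  rw [mem_ball_zero_iff] at hζ
  have hlim : Tendsto (fun r : ℝ => B / r ^ m) (𝓝[<] 1) (𝓝 B) := by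
    have : Tendsto (fun r : ℝ => B / r ^ m) (𝓝 1) (𝓝 (B / 1 ^ m)) :=
      tendsto_const_nhds.div (tendsto_id.pow m) (by norm_num)
    simpa using this.mono_left nhdsWithin_le_nhds
  refine ge_of_tendsto hlim ?_
  filter_upwards [Ioo_mem_nhdsLT hζ] with r ⟨hζr, hr1⟩
  have hr0 : 0 < r := (norm_nonneg ζ).trans_lt hζr
  have hsub : closure (ball (0 : ℂ) r) ⊆ ball 0 1 := by
    rw [closure_ball 0 hr0.ne']
    exact closedBall_subset_ball hr1
  refine Complex.norm_le_of_forall_mem_frontier_norm_le isBounded_ball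
    (hv.mono hsub).diffContOnCl (fun z hz => ?_) (subset_closure (mem_ball_zero_iff.2 hζr))
  rw [frontier_ball 0 hr0.ne', mem_sphere_zero_iff_norm] at hz
  rw [le_div_iff₀ (by positivity), mul_comm, ← hz]
  exact hB z (mem_ball_zero_iff.2 (hz ▸ hr1))

theorem norm_le_mul_norm_pow_of_le_analyticOrderAt {H : ℂ → ℂ} {m : ℕ} {B : ℝ}
    (hH : AnalyticOnNhd ℂ H (ball 0 1)) (hm : (m : ℕ∞) ≤ analyticOrderAt H 0)
    (hB : ∀ z ∈ ball (0 : ℂ) 1, ‖H z‖ ≤ B) : ∀ z ∈ ball (0 : ℂ) 1, ‖H z‖ ≤ B * ‖z‖ ^ m := by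
  obtain ⟨v, hv, hHv⟩ := exists_analyticOnNhd_eqOn_pow_mul hH (mem_ball_self one_pos) hm
  have hvB : ∀ z ∈ ball (0 : ℂ) 1, ‖v z‖ ≤ B :=
    norm_le_of_forall_norm_pow_mul_le hv.differentiableOn fun z hz => by
      simpa [hHv z hz] using hB z hz
  intro z hz
  rw [hHv z hz, norm_mul, norm_pow, mul_comm]
  exact mul_le_mul_of_nonneg_right (hvB z hz) (by positivity)

theorem norm_le_of_norm_deriv_le_mul_norm_pow {G : ℂ → ℂ} {m : ℕ} {C : ℝ}
    (hG : DifferentiableOn ℂ G (ball 0 1)) (hG0 : G 0 = 0)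
    (hG' : ∀ z ∈ ball (0 : ℂ) 1, ‖deriv G z‖ ≤ C * ‖z‖ ^ m) :
    ∀ z ∈ ball (0 : ℂ) 1, ‖G z‖ ≤ C / (m + 1) * ‖z‖ ^ (m + 1) := by
  intro z hz
  have hseg : ∀ t ∈ Icc (0 : ℝ) 1, (t : ℂ) * z ∈ ball (0 : ℂ) 1 := fun t ht => by
    simpa using (convex_ball (0 : ℂ) 1).smul_mem_of_zero_mem (mem_ball_self one_pos) hz ht
  have hderiv : ∀ t ∈ Icc (0 : ℝ) 1,
      HasDerivAt (fun s : ℝ => G (s * z)) (deriv G (t * z) * z) t := fun t ht =>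
    ((hG.differentiableAt (isOpen_ball.mem_nhds (hseg t ht))).hasDerivAt.comp (t : ℂ)
      (hasDerivAt_mul_const z)).comp_ofReal
  have hbound : ∀ t ∈ Ico (0 : ℝ) 1, ‖deriv G (t * z) * z‖ ≤
      C / (m + 1) * ‖z‖ ^ (m + 1) * ((m + 1 : ℕ) * t ^ m) := fun t ht => by
    have h := hG' _ (hseg t (Ico_subset_Icc_self ht))
    rw [norm_mul, Complex.norm_real, Real.norm_of_nonneg ht.1] at h
    calc ‖deriv G (t * z) * z‖ ≤ C * (t * ‖z‖) ^ m * ‖z‖ := by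
          rw [norm_mul]; exact mul_le_mul_of_nonneg_right h (norm_nonneg z)
      _ = C / (m + 1) * ‖z‖ ^ (m + 1) * ((m + 1 : ℕ) * t ^ m) := by
          push_cast; field_simp; ring
  simpa using image_norm_le_of_norm_deriv_right_le_deriv_boundary
    (f := fun s : ℝ => G (s * z)) (B := fun t => C / (m + 1) * ‖z‖ ^ (m + 1) * t ^ (m + 1))
    (fun t ht => (hderiv t ht).continuousAt.continuousWithinAt)
    (fun t ht => (hderiv t (Ico_subset_Icc_self ht)).hasDerivWithinAt)
    (by simp [hG0]) (fun t => (hasDerivAt_pow (m + 1) t).const_mul _) hbound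
    (right_mem_Icc.2 zero_le_one)

theorem stmt_1_general (n : ℕ) (f : ℂ → ℂ)
    (hf : MemA n f)
    (h : ∀ z ∈ unitDisc, ‖z * deriv (deriv f) z‖ < ((n : ℝ) + 1) / 2) :
    MemOmega n f := by
  refine ⟨hf, ?_⟩
  obtain ⟨hfd, a, ha⟩ := hf
  have h0 : (0 : ℂ) ∈ unitDisc := mem_ball_self one_pos
  have hfa : AnalyticOnNhd ℂ f unitDisc := hfd.analyticOnNhd isOpen_ball
  set G : ℂ → ℂ := fun z => z * deriv f z - f z
  have hGa : AnalyticOnNhd ℂ G unitDisc := fun z hz =>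
    (analyticAt_id.mul (hfa z hz).deriv).sub (hfa z hz)
  have hG' : ∀ z ∈ unitDisc, deriv G z = z * deriv (deriv f) z := fun z hz =>
    (hasDerivAt_mul_deriv_sub (hfa z hz).differentiableAt
      (hfa z hz).deriv.differentiableAt).deriv
  have hordG : ((n + 1 : ℕ) : ℕ∞) ≤ analyticOrderAt G 0 :=
    (natCast_le_analyticOrderAt_of_eventuallyEq_tsum (a := a)
      (eventually_of_mem (isOpen_ball.mem_nhds h0) fun z hz => by rw [ha z hz]; ring)).trans
      (analyticOrderAt_sub_id_le_mul_deriv_sub (hfa 0 h0))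
  have hG0 : G 0 = 0 :=
    apply_eq_zero_of_analyticOrderAt_ne_zero
      (lt_of_lt_of_le (by exact_mod_cast n.succ_pos) hordG).ne'
  have hordG' : (n : ℕ∞) ≤ analyticOrderAt (deriv G) 0 :=
    (analyticOrderAt_deriv_ge_iff (hGa 0 h0) hG0).2 (by exact_mod_cast hordG)
  have hG'bound := norm_le_mul_norm_pow_of_le_analyticOrderAt hGa.deriv hordG'
    fun z hz => (hG' z hz ▸ h z hz).le
  intro z hz
  have hz1 : ‖z‖ ^ (n + 1) < 1 :=
    pow_lt_one₀ (norm_nonneg z) (mem_ball_zero_iff.1 hz) n.succ_ne_zero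
  calc ‖z * deriv f z - f z‖ ≤ ((n : ℝ) + 1) / 2 / (n + 1) * ‖z‖ ^ (n + 1) :=
        norm_le_of_norm_deriv_le_mul_norm_pow hGa.differentiableOn hG0 hG'bound z hz
    _ = ‖z‖ ^ (n + 1) / 2 := by field_simp
    _ < 1 / 2 := by linarith

theorem stmt_1 (n : ℕ) (hn : 1 ≤ n) (f : ℂ → ℂ)
    (hf : MemA n f)
    (h : ∀ z ∈ unitDisc, ‖z * deriv (deriv f) z‖ < ((n : ℝ) + 1) / 2) :
    MemOmega n f :=
  stmt_1_general n f hf h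
end

section
/- Let f(z) = z + ∑_{k=2}^∞ a_k z^k be analytic on 𝔻. If ∑_{k=2}^∞ (k²−1)·|a_k| ≤ 3/2, then f ∈ Ω. -/
open Complex Metric

/-!
Writing `f(z) = z + ∑ a_m z^m` (`m ≥ n + 1`), termwise differentiation gives
`z f'(z) - f(z) = ∑ (m - 1) a_m z^m`, so `|z f'(z) - f(z)| ≤ |z| ∑ (m - 1) |a_m|`.
Since `m² - 1 = (m - 1)(m + 1)` and `m + 1 ≥ n + 2`, this is at most
`|z| / (n + 2) · ∑ (m² - 1) |a_m| ≤ |z| / 2 < 1 / 2`.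
-/

lemma norm_mul_pow_le_norm (b : ℂ) {z : ℂ} (hz : ‖z‖ ≤ 1) (e : ℕ) : ‖b * z ^ e‖ ≤ ‖b‖ := by
  rw [norm_mul, norm_pow]
  exact mul_le_of_le_one_right (norm_nonneg b) (pow_le_one₀ (norm_nonneg z) hz)

lemma summable_mul_pow_of_summable_norm {b : ℕ → ℂ} (hb : Summable fun k => ‖b k‖) {z : ℂ}
    (hz : ‖z‖ ≤ 1) (e : ℕ → ℕ) : Summable fun k => b k * z ^ e k :=
  .of_norm_bounded hb fun k => norm_mul_pow_le_norm (b k) hz (e k)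

section PowerSeries

variable {a : ℕ → ℂ} {n : ℕ} {z : ℂ}

lemma hasDerivAt_tsum_mul_pow (ha : Summable fun k => ((n + 1 + k : ℕ) : ℝ) * ‖a k‖)
    (hz : z ∈ unitDisc) :
    HasDerivAt (fun y => ∑' k, a k * y ^ (n + 1 + k))
      (∑' k, a k * (n + 1 + k : ℕ) * z ^ (n + k)) z := by
  refine hasDerivAt_tsum_of_isPreconnected (g := fun k y => a k * y ^ (n + 1 + k))
    (g' := fun k y => a k * (n + 1 + k : ℕ) * y ^ (n + k)) ha isOpen_ball
    (convex_ball (0 : ℂ) 1).isPreconnected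
    (fun k y _ => ?_) (fun k y hy => ?_) (mem_ball_self one_pos) ?_ hz
  · simpa [mul_assoc] using (hasDerivAt_pow (n + 1 + k) y).const_mul (a k)
  · have hy : ‖y‖ ≤ 1 := (mem_ball_zero_iff.1 hy).le
    refine (norm_mul_pow_le_norm _ hy _).trans_eq ?_
    rw [norm_mul, Complex.norm_natCast, mul_comm]
  · simp

lemma mul_one_add_tsum_sub_eq (ha : Summable fun k => ((n + 1 + k : ℕ) : ℝ) * ‖a k‖)
    (hz : ‖z‖ ≤ 1) :
    z * (1 + ∑' k, a k * (n + 1 + k : ℕ) * z ^ (n + k)) - (z + ∑' k, a k * z ^ (n + 1 + k)) =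
      ∑' k, a k * (n + k : ℕ) * z ^ (n + 1 + k) := by
  have hscaled : Summable fun k => a k * (n + 1 + k : ℕ) * z ^ (n + 1 + k) :=
    summable_mul_pow_of_summable_norm
      (ha.congr fun k => by rw [norm_mul, Complex.norm_natCast, mul_comm]) hz _
  have hself : Summable fun k => a k * z ^ (n + 1 + k) :=
    summable_mul_pow_of_summable_norm (ha.of_nonneg_of_le (fun _ => norm_nonneg _)
      fun k => le_mul_of_one_le_left (norm_nonneg _) (by norm_cast; omega)) hz _
  calc _ = ∑' k, a k * (n + 1 + k : ℕ) * z ^ (n + 1 + k) - ∑' k, a k * z ^ (n + 1 + k) := by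
        rw [mul_add, mul_one, ← tsum_mul_left, add_sub_add_left_eq_sub]
        congr 1
        exact tsum_congr fun k => by ring
    _ = _ := by
        rw [← hscaled.tsum_sub hself]
        exact tsum_congr fun k => by push_cast; ring

lemma norm_tsum_mul_pow_le (ha : Summable fun k => ((n + k : ℕ) : ℝ) * ‖a k‖) (hz : ‖z‖ ≤ 1) :
    ‖∑' k, a k * (n + k : ℕ) * z ^ (n + 1 + k)‖ ≤ ‖z‖ * ∑' k, ((n + k : ℕ) : ℝ) * ‖a k‖ := by
  have hterm (k : ℕ) :
      ‖a k * (n + k : ℕ) * z ^ (n + 1 + k)‖ ≤ ‖z‖ * (((n + k : ℕ) : ℝ) * ‖a k‖) := by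
    have hpow : ‖z‖ ^ (n + 1 + k) ≤ ‖z‖ := pow_le_of_le_one (norm_nonneg z) hz (by omega)
    rw [norm_mul, norm_mul, norm_pow, Complex.norm_natCast]
    calc ‖a k‖ * (n + k : ℕ) * ‖z‖ ^ (n + 1 + k) ≤ ‖a k‖ * (n + k : ℕ) * ‖z‖ := by gcongr
      _ = _ := by ring
  have hs : Summable fun k => ‖a k * (n + k : ℕ) * z ^ (n + 1 + k)‖ :=
    (ha.mul_left ‖z‖).of_nonneg_of_le (fun _ => norm_nonneg _) hterm
  calc _ ≤ ∑' k, ‖a k * (n + k : ℕ) * z ^ (n + 1 + k)‖ := norm_tsum_le_tsum_norm hs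
    _ ≤ ∑' k, ‖z‖ * (((n + k : ℕ) : ℝ) * ‖a k‖) := hs.tsum_le_tsum hterm (ha.mul_left _)
    _ = _ := tsum_mul_left

lemma add_two_mul_le_sq_sub_one (n k : ℕ) :
    ((n : ℝ) + 2) * ((n + k : ℕ) : ℝ) ≤ ((n : ℝ) + 1 + k) ^ 2 - 1 := by
  push_cast
  nlinarith [(n.cast_nonneg : (0 : ℝ) ≤ n), (k.cast_nonneg : (0 : ℝ) ≤ k)]

lemma le_sq_sub_one_of_one_le {n : ℕ} (hn : 1 ≤ n) (k : ℕ) :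
    ((n + 1 + k : ℕ) : ℝ) ≤ ((n : ℝ) + 1 + k) ^ 2 - 1 := by
  have hn' : (1 : ℝ) ≤ n := by exact_mod_cast hn
  push_cast
  nlinarith [(k.cast_nonneg : (0 : ℝ) ≤ k)]

lemma add_two_mul_tsum_le_tsum_sq_sub_one (hw : Summable fun k => ((n + k : ℕ) : ℝ) * ‖a k‖)
    (hsum : Summable fun k : ℕ => (((n : ℝ) + 1 + k) ^ 2 - 1) * ‖a k‖) :
    ((n : ℝ) + 2) * ∑' k, ((n + k : ℕ) : ℝ) * ‖a k‖ ≤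
      ∑' k, (((n : ℝ) + 1 + k) ^ 2 - 1) * ‖a k‖ := by
  rw [← tsum_mul_left]
  refine (hw.mul_left ((n : ℝ) + 2)).tsum_le_tsum (fun k => ?_) hsum
  rw [← mul_assoc]
  gcongr
  exact add_two_mul_le_sq_sub_one n k

end PowerSeries

theorem memOmega_of_tsum_le {n : ℕ} (hn : 1 ≤ n) {f : ℂ → ℂ} {a : ℕ → ℂ}
    (hrep : ∀ z ∈ unitDisc, f z = z + ∑' k, a k * z ^ (n + 1 + k))
    (hsum : Summable fun k : ℕ => (((n : ℝ) + 1 + k) ^ 2 - 1) * ‖a k‖)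
    (hle : ∑' k : ℕ, (((n : ℝ) + 1 + k) ^ 2 - 1) * ‖a k‖ ≤ ((n : ℝ) + 2) / 2) :
    MemOmega n f := by
  have hw : Summable fun k => ((n + 1 + k : ℕ) : ℝ) * ‖a k‖ :=
    hsum.of_nonneg_of_le (fun _ => by positivity) fun k => by
      gcongr; exact le_sq_sub_one_of_one_le hn k
  have hw' : Summable fun k => ((n + k : ℕ) : ℝ) * ‖a k‖ :=
    hw.of_nonneg_of_le (fun _ => by positivity) fun k => by gcongr; omega
  have hw'_le : ∑' k, ((n + k : ℕ) : ℝ) * ‖a k‖ ≤ 1 / 2 :=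
    le_of_mul_le_mul_left ((add_two_mul_tsum_le_tsum_sq_sub_one hw' hsum).trans
      (hle.trans_eq (by ring))) (by positivity : (0 : ℝ) < n + 2)
  have hderiv (z) (hz : z ∈ unitDisc) :
      HasDerivAt f (1 + ∑' k, a k * (n + 1 + k : ℕ) * z ^ (n + k)) z :=
    ((hasDerivAt_id z).add (hasDerivAt_tsum_mul_pow hw hz)).congr_of_eventuallyEq
      (Filter.eventuallyEq_of_mem (isOpen_ball.mem_nhds hz) hrep)
  refine ⟨⟨fun z hz => (hderiv z hz).differentiableAt.differentiableWithinAt, a, hrep⟩,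
    fun z hz => ?_⟩
  have hz1 : ‖z‖ < 1 := mem_ball_zero_iff.1 hz
  rw [(hderiv z hz).deriv, hrep z hz, mul_one_add_tsum_sub_eq hw hz1.le]
  calc _ ≤ ‖z‖ * ∑' k, ((n + k : ℕ) : ℝ) * ‖a k‖ := norm_tsum_mul_pow_le hw' hz1.le
    _ ≤ ‖z‖ * (1 / 2) := by gcongr
    _ < 1 / 2 := by linarith

theorem stmt_5_general (f : ℂ → ℂ) (a : ℕ → ℂ)
    (hrep : ∀ z ∈ unitDisc, f z = z + ∑' k : ℕ, a k * z ^ (2 + k))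
    (hsum : Summable fun k : ℕ => (((2 : ℝ) + k) ^ 2 - 1) * ‖a k‖)
    (hle : ∑' k : ℕ, (((2 : ℝ) + k) ^ 2 - 1) * ‖a k‖ ≤ 3 / 2) :
    MemOmega 1 f := by
  have htwo : ((1 : ℕ) : ℝ) + 1 = 2 := by norm_num
  refine memOmega_of_tsum_le le_rfl hrep ?_ ?_
  · simpa only [htwo] using hsum
  · simpa only [htwo] using hle.trans_eq (by norm_num)

theorem stmt_5 (f : ℂ → ℂ) (a : ℕ → ℂ)
    (hf : DifferentiableOn ℂ f unitDisc)
    (hrep : ∀ z ∈ unitDisc, f z = z + ∑' k : ℕ, a k * z ^ (2 + k))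
    (hsum : Summable fun k : ℕ => (((2 : ℝ) + k) ^ 2 - 1) * ‖a k‖)
    (hle : ∑' k : ℕ, (((2 : ℝ) + k) ^ 2 - 1) * ‖a k‖ ≤ 3 / 2) :
    MemOmega 1 f :=
  stmt_5_general f a hrep hsum hle
end

section
/- Let k ≥ 3 be an integer and a ∈ ℂ. If the function f(z) = z + a·z^k belongs to the parabolic starlike class S_p, then f belongs to the uniformly starlike class UST. -/
open Complex Metric

/-!
Write `f z = z + a z^k`. Along the ray where `a z^(k-1)` is a negative real `-t`, the quotient
`z f'(z) / f(z) = (1 - k t) / (1 - t)` is real, and the parabolic condition `Re w > |w - 1|` says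
exactly that it exceeds `1/2`; letting `|z| → 1` gives `(2k - 1) |a| ≤ 1`. Then both `f'(z)` and
`(f(z) - f(ξ)) / (z - ξ)` have the form `1 + u` with `|u| ≤ k |a| ≤ k / (2k - 1) ≤ 1/√2`, so their
arguments lie in `[-π/4, π/4]` and their quotient has nonnegative real part.
-/

open Filter Topology

def IsParabolicStarlike (f : ℂ → ℂ) : Prop :=
  ∀ z ∈ unitDisc, z ≠ 0 → f z ≠ 0 ∧ (z * deriv f z / f z).re > ‖z * deriv f z / f z - 1‖

def IsUniformlyStarlike (f : ℂ → ℂ) : Prop :=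
  ∀ z ∈ unitDisc, ∀ ξ ∈ unitDisc, f z ≠ f ξ → 0 ≤ ((z - ξ) * deriv f z / (f z - f ξ)).re

lemma mem_unitDisc {z : ℂ} : z ∈ unitDisc ↔ ‖z‖ < 1 := mem_ball_zero_iff

lemma re_one_add_div_one_add_nonneg {u v : ℂ} (hu : ‖u‖ ^ 2 ≤ 1 / 2) (hv : ‖v‖ ^ 2 ≤ 1 / 2) :
    0 ≤ ((1 + u) / (1 + v)).re := by
  rw [← normSq_eq_norm_sq, normSq_apply] at hu hv
  rw [div_re, ← add_div]
  apply div_nonneg _ (normSq_nonneg _)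
  simp only [add_re, add_im, one_re, one_im]
  nlinarith [sq_nonneg (u.re + v.re + 1), sq_nonneg (u.im + v.im), sq_nonneg (u.im - v.im),
    sq_nonneg (u.re - v.re)]

lemma one_half_lt_re_of_norm_sub_one_lt_re {w : ℂ} (h : ‖w - 1‖ < w.re) : 1 / 2 < w.re := by
  have : 1 - w.re ≤ ‖w - 1‖ := by
    simpa using (neg_le_abs (w - 1).re).trans (abs_re_le_norm (w - 1))
  linarith

lemma exists_norm_eq_and_mul_pow_eq (a : ℂ) {n : ℕ} (hn : n ≠ 0) {r : ℝ} (hr : 0 ≤ r) :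
    ∃ z : ℂ, ‖z‖ = r ∧ a * z ^ n = -((‖a‖ * r ^ n : ℝ) : ℂ) := by
  rcases eq_or_ne a 0 with rfl | ha
  · exact ⟨r, by simp [hr], by simp⟩
  obtain ⟨w, hw⟩ := IsAlgClosed.exists_pow_nat_eq (-(‖a‖ / a)) (Nat.pos_of_ne_zero hn)
  have hw1 : ‖w‖ = 1 := by
    rw [← pow_eq_one_iff_of_nonneg (norm_nonneg w) hn, ← norm_pow, hw]
    simp [ha]
  refine ⟨r * w, by simp [hw1, hr], ?_⟩
  rw [mul_pow, hw]
  field_simp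
  push_cast
  ring

lemma deriv_add_mul_pow (a : ℂ) (k : ℕ) (z : ℂ) :
    deriv (fun w => w + a * w ^ k) z = 1 + a * (k * z ^ (k - 1)) :=
  ((hasDerivAt_id' z).add ((hasDerivAt_pow k z).const_mul a)).deriv

lemma add_mul_pow_eq_mul {k : ℕ} (hk : k ≠ 0) (a w : ℂ) :
    w + a * w ^ k = w * (1 + a * w ^ (k - 1)) := by
  obtain ⟨n, rfl⟩ := Nat.exists_eq_succ_of_ne_zero hk
  rw [Nat.succ_sub_one, pow_succ']
  ring

lemma add_mul_pow_sub_add_mul_pow (a z ξ : ℂ) (k : ℕ) :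
    (z + a * z ^ k) - (ξ + a * ξ ^ k) =
      (z - ξ) * (1 + a * ∑ i ∈ Finset.range k, z ^ i * ξ ^ (k - 1 - i)) := by
  linear_combination a * (geom_sum₂_mul z ξ k).symm

lemma norm_sum_range_pow_mul_pow_le {z ξ : ℂ} (hz : ‖z‖ ≤ 1) (hξ : ‖ξ‖ ≤ 1) (n : ℕ) :
    ‖∑ i ∈ Finset.range n, z ^ i * ξ ^ (n - 1 - i)‖ ≤ n := by
  refine (norm_sum_le_of_le (n := fun _ => (1 : ℝ)) _ fun i _ => ?_).trans (by simp)
  rw [norm_mul, norm_pow, norm_pow]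
  exact mul_le_one₀ (pow_le_one₀ (norm_nonneg _) hz) (by positivity)
    (pow_le_one₀ (norm_nonneg _) hξ)

section

variable {a : ℂ} {k : ℕ}

/-- If `‖a‖ > 1`, a `(k-1)`-th root `z` of `-1/a` lies in the disc, and
`z + a z^k = z (1 + a z^(k-1))` vanishes there. -/
lemma norm_le_one_of_add_mul_pow_ne_zero (hk : 2 ≤ k)
    (h : ∀ z ∈ unitDisc, z ≠ 0 → z + a * z ^ k ≠ 0) : ‖a‖ ≤ 1 := by
  by_contra! ha
  have ha0 : a ≠ 0 := norm_pos_iff.mp (one_pos.trans ha)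
  obtain ⟨z, hz⟩ := IsAlgClosed.exists_pow_nat_eq (-a⁻¹) (by omega : 0 < k - 1)
  have hz0 : z ≠ 0 := by
    rintro rfl
    simp [zero_pow (by omega : k - 1 ≠ 0), ha0] at hz
  have hz1 : ‖z‖ < 1 := by
    rw [← pow_lt_one_iff_of_nonneg (norm_nonneg z) (by omega : k - 1 ≠ 0), ← norm_pow, hz,
      norm_neg, norm_inv]
    exact inv_lt_one_of_one_lt₀ ha
  apply h z (mem_unitDisc.mpr hz1) hz0
  rw [add_mul_pow_eq_mul (by omega), hz, mul_neg, mul_inv_cancel₀ ha0, add_neg_cancel, mul_zero]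

lemma mul_norm_mul_pow_lt_one_of_isParabolicStarlike (hk : 2 ≤ k)
    (hSp : IsParabolicStarlike (fun w => w + a * w ^ k)) {r : ℝ} (hr0 : 0 < r) (hr1 : r < 1) :
    (2 * k - 1) * (‖a‖ * r ^ (k - 1)) < 1 := by
  obtain ⟨z, hzr, hz⟩ := exists_norm_eq_and_mul_pow_eq a (by omega : k - 1 ≠ 0) hr0.le
  set t := ‖a‖ * r ^ (k - 1)
  have ht1 : t < 1 :=
    calc t ≤ 1 * r ^ (k - 1) :=
          mul_le_mul_of_nonneg_right
            (norm_le_one_of_add_mul_pow_ne_zero hk fun z hz hz0 => (hSp z hz hz0).1) (by positivity)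
      _ < 1 := by rw [one_mul]; exact pow_lt_one₀ hr0.le hr1 (by omega)
  have hz0 : z ≠ 0 := norm_pos_iff.mp (hzr ▸ hr0)
  have hquot : z * deriv (fun w => w + a * w ^ k) z / (z + a * z ^ k) =
      (((1 - k * t) / (1 - t) : ℝ) : ℂ) := by
    rw [deriv_add_mul_pow, add_mul_pow_eq_mul (by omega), mul_left_comm a, hz,
      mul_div_mul_left _ _ hz0]
    push_cast
    ring
  have hhalf := one_half_lt_re_of_norm_sub_one_lt_re (hSp z (mem_unitDisc.mpr (hzr ▸ hr1)) hz0).2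
  rw [hquot, ofReal_re, lt_div_iff₀ (sub_pos.mpr ht1)] at hhalf
  linarith

lemma mul_norm_le_one_of_isParabolicStarlike (hk : 2 ≤ k)
    (hSp : IsParabolicStarlike (fun w => w + a * w ^ k)) : (2 * k - 1) * ‖a‖ ≤ 1 := by
  have hlim : Tendsto (fun r : ℝ => (2 * k - 1) * (‖a‖ * r ^ (k - 1))) (𝓝[<] 1)
      (𝓝 ((2 * k - 1) * (‖a‖ * 1 ^ (k - 1)))) :=
    (Continuous.tendsto (by fun_prop) _).mono_left nhdsWithin_le_nhds
  rw [one_pow, mul_one] at hlim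
  refine le_of_tendsto hlim ?_
  filter_upwards [Ioo_mem_nhdsLT one_pos] with r hr
  exact (mul_norm_mul_pow_lt_one_of_isParabolicStarlike hk hSp hr.1 hr.2).le

lemma isUniformlyStarlike_of_mul_norm_le_one (hk : 2 ≤ k) (ha : (2 * k - 1) * ‖a‖ ≤ 1) :
    IsUniformlyStarlike (fun w => w + a * w ^ k) := by
  intro z hz ξ hξ hne
  have hzξ : z - ξ ≠ 0 := sub_ne_zero.mpr fun h => hne (by rw [h])
  have hz1 := (mem_unitDisc.mp hz).le
  have hξ1 := (mem_unitDisc.mp hξ).le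
  have hk2 : (2 : ℝ) ≤ k := by exact_mod_cast hk
  have hsq : ((k : ℝ) * ‖a‖) ^ 2 ≤ 1 / 2 := by
    have h2 : 2 * ((k : ℝ) * ‖a‖) ^ 2 ≤ ((2 * k - 1) * ‖a‖) ^ 2 := by
      nlinarith [sq_nonneg ‖a‖]
    have h1 : ((2 * k - 1) * ‖a‖) ^ 2 ≤ 1 :=
      pow_le_one₀ (mul_nonneg (by linarith) (norm_nonneg a)) ha
    linarith
  have hbound {c : ℂ} (hc : ‖c‖ ≤ k) : ‖a * c‖ ^ 2 ≤ 1 / 2 := by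
    refine le_trans ?_ hsq
    rw [norm_mul, mul_comm (k : ℝ)]
    gcongr
  dsimp only
  rw [deriv_add_mul_pow, add_mul_pow_sub_add_mul_pow, mul_div_mul_left _ _ hzξ]
  refine re_one_add_div_one_add_nonneg (hbound ?_)
    (hbound (norm_sum_range_pow_mul_pow_le hz1 hξ1 k))
  rw [norm_mul, Complex.norm_natCast, norm_pow]
  exact mul_le_of_le_one_right (Nat.cast_nonneg k) (pow_le_one₀ (norm_nonneg z) hz1)

end

theorem stmt_13 (k : ℕ) (hk : 3 ≤ k) (a : ℂ)
    (hSp : ∀ z ∈ unitDisc, z ≠ 0 →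
      (z + a * z ^ k ≠ 0 ∧
        (z * deriv (fun w => w + a * w ^ k) z / (z + a * z ^ k)).re >
          ‖z * deriv (fun w => w + a * w ^ k) z / (z + a * z ^ k) - 1‖)) :
    ∀ z ∈ unitDisc, ∀ ξ ∈ unitDisc,
      (z + a * z ^ k) ≠ (ξ + a * ξ ^ k) →
        0 ≤ ((z - ξ) * deriv (fun w => w + a * w ^ k) z /
              ((z + a * z ^ k) - (ξ + a * ξ ^ k))).re :=
  isUniformlyStarlike_of_mul_norm_le_one (by omega)
    (mul_norm_le_one_of_isParabolicStarlike (by omega) hSp)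
end

section
/- Let f ∈ Ω and let z ∈ 𝔻 with z ≠ 0. Then f(z) ≠ 0 and |z·f'(z)/f(z) − 1| ≤ |z|/(2 − |z|). -/
open Complex Metric

/-!
Write `f z = z * F z` with `F = dslope f 0`, so that `z ^ 2 * F' z = g z := z * f' z - f z`.
Since `g 0 = g' 0 = 0` and `‖g‖ < 1 / 2`, the Schwarz lemma gives `‖g z‖ ≤ ‖z‖ ^ 2 / 2`, i.e.
`‖F'‖ ≤ 1 / 2` on the disc. As `F 0 = f' 0 = 1` (read off the power series), the mean value
inequality gives `‖F z - 1‖ ≤ ‖z‖ / 2`, hence `‖f z‖ ≥ ‖z‖ * (1 - ‖z‖ / 2) > 0` and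
`‖z * f' z / f z - 1‖ = ‖g z‖ / ‖f z‖ ≤ ‖z‖ / (2 - ‖z‖)`.
-/

open Filter Asymptotics Set Topology

section PowerSeries

variable {𝕜 : Type*} [NormedField 𝕜]

theorem norm_tsum_mul_pow_le_of_summable {a : ℕ → 𝕜} {z₀ : 𝕜}
    (h : Summable fun k ↦ a k * z₀ ^ k) :
    ∃ C, ∀ w : 𝕜, ‖w‖ ≤ ‖z₀‖ / 2 → ‖∑' k, a k * w ^ k‖ ≤ C := by
  obtain ⟨M, hM⟩ := h.tendsto_atTop_zero.norm.bddAbove_range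
  refine ⟨M * 2, fun w hw ↦ tsum_of_norm_bounded (hasSum_geometric_two.mul_left M) fun k ↦ ?_⟩
  calc ‖a k * w ^ k‖ = ‖a k‖ * ‖w‖ ^ k := by rw [norm_mul, norm_pow]
    _ ≤ ‖a k‖ * (‖z₀‖ / 2) ^ k := by gcongr
    _ = ‖a k * z₀ ^ k‖ * (1 / 2) ^ k := by
      rw [norm_mul, norm_pow, div_eq_mul_one_div ‖z₀‖ 2, mul_pow, mul_assoc]
    _ ≤ M * (1 / 2) ^ k := by gcongr; exact hM (mem_range_self k)

theorem tsum_mul_pow_isBigO_one (a : ℕ → 𝕜) :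
    (fun w ↦ ∑' k, a k * w ^ k) =O[𝓝 0] (fun _ ↦ (1 : 𝕜)) := by
  by_cases h : ∃ z₀ ≠ 0, Summable fun k ↦ a k * z₀ ^ k
  · obtain ⟨z₀, hz₀, hsum⟩ := h
    obtain ⟨C, hC⟩ := norm_tsum_mul_pow_le_of_summable hsum
    refine .of_bound C ?_
    filter_upwards [closedBall_mem_nhds (0 : 𝕜) (by positivity : 0 < ‖z₀‖ / 2)] with w hw
    simpa using hC w (mem_closedBall_zero_iff.mp hw)
  · push Not at h
    -- off `0` every sum diverges, so `tsum` takes its junk value `0`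
    refine .of_bound ‖a 0‖ (.of_forall fun w ↦ ?_)
    rcases eq_or_ne w 0 with rfl | hw
    · rw [tsum_eq_single 0 fun k hk ↦ by simp [hk]]
      simp
    · simp [tsum_eq_zero_of_not_summable (h w hw)]

end PowerSeries

namespace MemA

variable {n : ℕ} {f : ℂ → ℂ}

theorem apply_zero (hf : MemA n f) : f 0 = 0 := by
  obtain ⟨-, a, hser⟩ := hf
  simpa using hser 0 (mem_ball_self one_pos)

theorem hasDerivAt_zero (hf : MemA n f) (hn : n ≠ 0) : HasDerivAt f 1 0 := by
  have hf0 := hf.apply_zero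
  obtain ⟨-, a, hser⟩ := hf
  have hfactor : ∀ᶠ w in 𝓝 0, f w - w = w ^ (n + 1) * ∑' k, a k * w ^ k := by
    filter_upwards [ball_mem_nhds (0 : ℂ) one_pos] with w hw
    rw [hser w hw, add_sub_cancel_left, ← tsum_mul_left]
    simp only [pow_add, mul_left_comm]
  have hsmall : (fun w ↦ f w - w) =o[𝓝 0] fun w ↦ w :=
    ((isLittleO_pow_id (by omega)).mul_isBigO (tsum_mul_pow_isBigO_one a)).congr'
      (hfactor.mono fun w hw ↦ hw.symm) (.of_forall fun w ↦ mul_one w)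
  rw [hasDerivAt_iff_isLittleO]
  simpa [hf0] using hsmall

end MemA

theorem deriv_dslope_zero {𝕜 : Type*} [NontriviallyNormedField 𝕜] {f : 𝕜 → 𝕜} {w : 𝕜}
    (hf : DifferentiableAt 𝕜 f w) (hw : w ≠ 0) :
    deriv (dslope f 0) w = (w * deriv f w - (f w - f 0)) / w ^ 2 := by
  have hslope : dslope f 0 =ᶠ[𝓝 w] fun x ↦ (f x - f 0) / x := by
    filter_upwards [eventually_ne_nhds hw] with x hx
    rw [dslope_of_ne f hx, slope_def_field, sub_zero]
  rw [hslope.deriv_eq, deriv_fun_div (hf.sub_const _) differentiableAt_fun_id hw, deriv_sub_const]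
  simp only [deriv_id'']
  ring

section Schwarz

variable {f : ℂ → ℂ} {R C : ℝ} {z : ℂ}

theorem norm_mul_deriv_sub_le (hf : DifferentiableOn ℂ f (ball 0 R)) (hf0 : f 0 = 0)
    (hC : ∀ w ∈ ball (0 : ℂ) R, ‖w * deriv f w - f w‖ ≤ C) (hz : z ∈ ball (0 : ℂ) R) :
    ‖z * deriv f z - f z‖ ≤ C * (‖z‖ / R) ^ 2 := by
  set g : ℂ → ℂ := fun w ↦ w * deriv f w - f w
  have hana : AnalyticOnNhd ℂ f (ball 0 R) := hf.analyticOnNhd isOpen_ball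
  have hg : DifferentiableOn ℂ g (ball 0 R) :=
    (differentiableOn_id.mul hana.deriv.differentiableOn).sub hf
  have hg0 : g 0 = 0 := by simp [g, hf0]
  have hf₀ := hana 0 (mem_ball_self (pos_of_mem_ball hz))
  have hg' : HasDerivAt g (1 * deriv f 0 + 0 * deriv (deriv f) 0 - deriv f 0) 0 :=
    ((hasDerivAt_id' 0).mul hf₀.deriv.differentiableAt.hasDerivAt).sub
      hf₀.differentiableAt.hasDerivAt
  rw [one_mul, zero_mul, add_zero, sub_self] at hg'
  have hsmall : (g · - g 0) =o[𝓝 0] fun w ↦ ‖w - 0‖ ^ 1 := by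
    simpa using (hasDerivAt_iff_isLittleO.mp hg').norm_right
  simpa [hg0, g] using dist_le_mul_div_pow_of_mapsTo_ball_of_isLittleO hg
    (fun w hw ↦ by simpa [hg0] using hC w hw) hsmall hz

theorem norm_deriv_dslope_le (hf : DifferentiableOn ℂ f (ball 0 R)) (hf0 : f 0 = 0)
    (hC : ∀ w ∈ ball (0 : ℂ) R, ‖w * deriv f w - f w‖ ≤ C) (hz : z ∈ ball (0 : ℂ) R) :
    ‖deriv (dslope f 0) z‖ ≤ C / R ^ 2 := by
  have hR := pos_of_mem_ball hz
  have hoff : ∀ w ∈ ball (0 : ℂ) R, w ≠ 0 → ‖deriv (dslope f 0) w‖ ≤ C / R ^ 2 := by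
    intro w hw hw0
    rw [deriv_dslope_zero (hf.differentiableAt (isOpen_ball.mem_nhds hw)) hw0, hf0, sub_zero,
      norm_div, norm_pow, div_le_iff₀ (by positivity)]
    calc ‖w * deriv f w - f w‖ ≤ C * (‖w‖ / R) ^ 2 := norm_mul_deriv_sub_le hf hf0 hC hw
      _ = C / R ^ 2 * ‖w‖ ^ 2 := by ring
  rcases eq_or_ne z 0 with rfl | hz0
  · have hF : DifferentiableOn ℂ (dslope f 0) (ball 0 R) :=
      (differentiableOn_dslope (ball_mem_nhds 0 hR)).mpr hf
    have hcont : ContinuousAt (deriv (dslope f 0)) 0 :=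
      ((hF.analyticOnNhd isOpen_ball).deriv 0 hz).continuousAt
    refine le_of_tendsto (hcont.tendsto.mono_left (nhdsWithin_le_nhds (s := {0}ᶜ))).norm ?_
    filter_upwards [inter_mem_nhdsWithin {0}ᶜ (ball_mem_nhds 0 hR)] with w ⟨hw0, hw⟩
    exact hoff w hw hw0
  · exact hoff z hz hz0

theorem norm_dslope_sub_deriv_le (hf : DifferentiableOn ℂ f (ball 0 R)) (hf0 : f 0 = 0)
    (hC : ∀ w ∈ ball (0 : ℂ) R, ‖w * deriv f w - f w‖ ≤ C) (hz : z ∈ ball (0 : ℂ) R) :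
    ‖dslope f 0 z - deriv f 0‖ ≤ C / R ^ 2 * ‖z‖ := by
  have hR := pos_of_mem_ball hz
  have hF : DifferentiableOn ℂ (dslope f 0) (ball 0 R) :=
    (differentiableOn_dslope (ball_mem_nhds 0 hR)).mpr hf
  simpa [dslope_same] using (convex_ball (0 : ℂ) R).norm_image_sub_le_of_norm_deriv_le
    (fun w hw ↦ hF.differentiableAt (isOpen_ball.mem_nhds hw))
    (fun w hw ↦ norm_deriv_dslope_le hf hf0 hC hw) (mem_ball_self hR) hz

end Schwarz

theorem stmt_14 (f : ℂ → ℂ) (hf : MemOmega 1 f) (z : ℂ) (hz : z ∈ unitDisc) (hz0 : z ≠ 0) :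
    f z ≠ 0 ∧ ‖z * deriv f z / f z - 1‖ ≤ ‖z‖ / (2 - ‖z‖) := by
  obtain ⟨hA, hbound⟩ := hf
  have hf0 : f 0 = 0 := hA.apply_zero
  have hC : ∀ w ∈ ball (0 : ℂ) 1, ‖w * deriv f w - f w‖ ≤ 1 / 2 := fun w hw ↦ (hbound w hw).le
  have hfF : f z = z * dslope f 0 z := by simpa [hf0] using (sub_smul_dslope f 0 z).symm
  have hF : ‖dslope f 0 z - 1‖ ≤ 1 / 2 * ‖z‖ := by
    simpa [(hA.hasDerivAt_zero one_ne_zero).deriv] using norm_dslope_sub_deriv_le hA.1 hf0 hC hz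
  have hnum : ‖z * deriv f z - f z‖ ≤ 1 / 2 * ‖z‖ ^ 2 := by
    simpa using norm_mul_deriv_sub_le hA.1 hf0 hC hz
  have hz1 : ‖z‖ < 1 := mem_ball_zero_iff.mp hz
  have hFlow : 1 - ‖z‖ / 2 ≤ ‖dslope f 0 z‖ := by
    have := norm_sub_norm_le (1 : ℂ) (dslope f 0 z)
    rw [norm_sub_rev, norm_one] at this
    linarith
  have hzpos : 0 < ‖z‖ := norm_pos_iff.mpr hz0
  have hfz : f z ≠ 0 := by
    rw [hfF]
    exact mul_ne_zero hz0 (norm_pos_iff.mp (by linarith))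
  refine ⟨hfz, ?_⟩
  calc ‖z * deriv f z / f z - 1‖ = ‖z * deriv f z - f z‖ / ‖f z‖ := by
        rw [div_sub_one hfz, norm_div]
    _ ≤ 1 / 2 * ‖z‖ ^ 2 / (‖z‖ * (1 - ‖z‖ / 2)) := by
        refine div_le_div₀ (by positivity) hnum (by nlinarith) ?_
        rw [hfF, norm_mul]
        gcongr
    _ = ‖z‖ / (2 - ‖z‖) := by
        field_simp
end

section
/- Let f ∈ Ω and let z ∈ ℂ with 0 < |z| < 2/3. Then f(z) ≠ 0 and Re(z·f'(z)/f(z)) > |z·f'(z)/f(z) − 1|. (That is, the S_p-radius for the class Ω is 2/3.) -/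
open Complex Metric

/-! With `w z = z * f' z - f z`, the normalisation `f z = z + O(z²)` gives `w 0 = w' 0 = 0`,
so the Schwarz lemma applied twice to `w`, which maps `𝔻` into the disc of radius `1/2`, gives
`‖w z‖ ≤ ‖z‖² / 2`. Since `(f z / z)' = w z / z²`, the mean value inequality yields
`‖f z - z‖ ≤ ‖z‖² / 2`, hence `‖f z‖ ≥ ‖z‖ (1 - ‖z‖ / 2) > 0`. Therefore
`‖z f' z / f z - 1‖ = ‖w z‖ / ‖f z‖ ≤ ‖z‖ / (2 - ‖z‖) < 1/2` for `‖z‖ < 2/3`, and every `u` with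
`‖u - 1‖ < 1/2` has `re u > 1/2 > ‖u - 1‖`. -/

open Set Filter Asymptotics Topology

section PowerSeries

variable {𝕜 : Type*} [NontriviallyNormedField 𝕜]

theorem hasDerivAt_pow_mul_of_isBigO_one {g : 𝕜 → 𝕜} (hg : g =O[𝓝 0] fun _ => (1 : 𝕜))
    {n : ℕ} (hn : 2 ≤ n) : HasDerivAt (fun z => z ^ n * g z) 0 0 := by
  rw [hasDerivAt_iff_isLittleO]
  simpa [zero_pow (by omega : n ≠ 0)] using (isLittleO_pow_id (by omega)).mul_isBigO hg

theorem isBigO_one_tsum_mul_pow [CompleteSpace 𝕜] (a : ℕ → 𝕜) :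
    (fun z : 𝕜 => ∑' k, a k * z ^ k) =O[𝓝 0] fun _ => (1 : 𝕜) := by
  set p := FormalMultilinearSeries.ofScalars 𝕜 a
  rcases eq_zero_or_pos p.radius with hp0 | hpos
  -- with zero radius the series diverges off `0`, where the `tsum` is then the junk value `0`
  · have hdiv : ∀ z ≠ 0, ¬ Summable fun k => a k * z ^ k := by
      intro z hz hs
      have := p.le_radius_of_tendsto (r := ‖z‖₊) (l := 0) (by
        simpa [p, FormalMultilinearSeries.ofScalars_norm] using hs.tendsto_atTop_zero.norm)
      simp_all
    refine isBigO_iff.2 ⟨‖a 0‖, Eventually.of_forall fun z => ?_⟩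
    rcases eq_or_ne z 0 with rfl | hz
    · rw [tsum_eq_single 0 fun k hk => by simp [hk]]; simp
    · simp [tsum_eq_zero_of_not_summable (hdiv z hz)]
  · rw [show (fun z : 𝕜 => ∑' k, a k * z ^ k) = p.sum from
      funext fun z => (FormalMultilinearSeries.ofScalars_sum_eq a z).symm]
    exact (p.hasFPowerSeriesOnBall hpos).analyticAt.continuousAt.tendsto.isBigO_one 𝕜

end PowerSeries

theorem MemA.apply_zero_s16 {n : ℕ} {f : ℂ → ℂ} (hf : MemA n f) : f 0 = 0 := by
  obtain ⟨-, a, ha⟩ := hf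
  simpa using ha 0 (mem_ball_self one_pos)

theorem MemA.hasDerivAt_zero_s16 {n : ℕ} {f : ℂ → ℂ} (hf : MemA n f) (hn : 1 ≤ n) :
    HasDerivAt f 1 0 := by
  obtain ⟨-, a, ha⟩ := hf
  have hfg : f =ᶠ[𝓝 0] fun z => z + z ^ (n + 1) * ∑' k, a k * z ^ k := by
    filter_upwards [ball_mem_nhds (0 : ℂ) one_pos] with z hz
    simp only [ha z hz, pow_add _ (n + 1), ← tsum_mul_left]
    congr 1; exact tsum_congr fun k => by ring
  simpa using ((hasDerivAt_id 0).add (hasDerivAt_pow_mul_of_isBigO_one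
    (isBigO_one_tsum_mul_pow a) (by omega))).congr_of_eventuallyEq hfg

theorem Complex.norm_le_div_sq_mul_sq_of_mapsTo_ball {w : ℂ → ℂ} {R M : ℝ} {z : ℂ}
    (hd : DifferentiableOn ℂ w (ball 0 R)) (h0 : w 0 = 0) (h1 : deriv w 0 = 0)
    (hM : MapsTo w (ball 0 R) (closedBall 0 M)) (hz : z ∈ ball 0 R) :
    ‖w z‖ ≤ M / R ^ 2 * ‖z‖ ^ 2 := by
  have hgd : DifferentiableOn ℂ (dslope w 0) (ball 0 R) :=
    (differentiableOn_dslope (ball_mem_nhds 0 (pos_of_mem_ball hz))).2 hd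
  have hg : MapsTo (dslope w 0) (ball 0 R) (closedBall 0 (M / R)) := fun x hx =>
    mem_closedBall_zero_iff.2 (norm_dslope_le_div_of_mapsTo_ball hd (by rwa [h0]) hx)
  have hwz : w z = z ^ 2 * dslope (dslope w 0) 0 z := by
    have hw := sub_smul_dslope w 0 z
    have hg := sub_smul_dslope (dslope w 0) 0 z
    simp only [sub_zero, smul_eq_mul, h0, dslope_same, h1] at hw hg
    rw [← hw, ← hg]; ring
  have hgg := norm_dslope_le_div_of_mapsTo_ball hgd (by rwa [dslope_same, h1]) hz
  rw [div_div, ← sq] at hgg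
  rw [hwz, norm_mul, norm_pow, mul_comm]
  gcongr

theorem hasDerivAt_dslope_of_ne {𝕜 : Type*} [NontriviallyNormedField 𝕜] {f : 𝕜 → 𝕜}
    {f' a x : 𝕜} (hf : HasDerivAt f f' x) (hx : x ≠ a) :
    HasDerivAt (dslope f a) (((x - a) * f' - (f x - f a)) / (x - a) ^ 2) x := by
  have hfa : dslope f a =ᶠ[𝓝 x] fun y => (f y - f a) / (y - a) := by
    filter_upwards [isOpen_ne.mem_nhds hx] with y hy
    rw [dslope_of_ne f hy, slope_def_field]
  refine (((hf.sub_const (f a)).div ((hasDerivAt_id x).sub_const a)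
    (sub_ne_zero.2 hx)).congr_of_eventuallyEq hfa).congr_deriv ?_
  simp only [id]
  ring

theorem Complex.norm_sub_le_of_norm_deriv_le_of_ne {h : ℂ → ℂ} {c z : ℂ} {R C : ℝ}
    (hd : DifferentiableOn ℂ h (ball c R)) (hC : ∀ x ∈ ball c R, x ≠ c → ‖deriv h x‖ ≤ C)
    (hz : z ∈ ball c R) : ‖h z - h c‖ ≤ C * ‖z - c‖ := by
  have hc : c ∈ ball c R := mem_ball_self (pos_of_mem_ball hz)
  have hCc : ‖deriv h c‖ ≤ C := by
    have hcont : ContinuousAt (deriv h) c :=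
      ((hd.deriv isOpen_ball).differentiableAt (isOpen_ball.mem_nhds hc)).continuousAt
    refine le_of_tendsto (hcont.norm.mono_left (nhdsWithin_le_nhds (s := {c}ᶜ))) ?_
    filter_upwards [nhdsWithin_le_nhds (isOpen_ball.mem_nhds hc), self_mem_nhdsWithin]
      with x hx hxc using hC x hx hxc
  refine (convex_ball c R).norm_image_sub_le_of_norm_deriv_le
    (fun x hx => hd.differentiableAt (isOpen_ball.mem_nhds hx)) (fun x hx => ?_) hc hz
  rcases eq_or_ne x c with rfl | hxc
  exacts [hCc, hC x hx hxc]

namespace MemOmega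

variable {f : ℂ → ℂ} {z : ℂ}

theorem norm_mul_deriv_sub_le (hf : MemOmega 1 f) (hz : z ∈ unitDisc) :
    ‖z * deriv f z - f z‖ ≤ ‖z‖ ^ 2 / 2 := by
  obtain ⟨hA, hbound⟩ := hf
  have hd : DifferentiableOn ℂ f (ball 0 1) := hA.1
  have hd' : DifferentiableOn ℂ (deriv f) (ball 0 1) := hd.deriv isOpen_ball
  have h0 : ball (0 : ℂ) 1 ∈ 𝓝 0 := ball_mem_nhds 0 one_pos
  have hw' : HasDerivAt (fun y => y * deriv f y - f y)
      (1 * deriv f 0 + 0 * deriv (deriv f) 0 - deriv f 0) 0 :=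
    ((hasDerivAt_id 0).mul (hd'.differentiableAt h0).hasDerivAt).sub
      (hd.differentiableAt h0).hasDerivAt
  have := Complex.norm_le_div_sq_mul_sq_of_mapsTo_ball (M := 1 / 2)
    (w := fun y => y * deriv f y - f y) ((differentiableOn_id.mul hd').sub hd)
    (by simp [hA.apply_zero_s16]) (by rw [hw'.deriv]; ring)
    (fun x hx => mem_closedBall_zero_iff.2 (hbound x hx).le) hz
  linarith

theorem norm_sub_le (hf : MemOmega 1 f) (hz : z ∈ unitDisc) : ‖f z - z‖ ≤ ‖z‖ ^ 2 / 2 := by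
  have hd : DifferentiableOn ℂ f (ball 0 1) := hf.1.1
  have hf0 := hf.1.apply_zero_s16
  have hderiv : ∀ x ∈ ball (0 : ℂ) 1, x ≠ 0 → ‖deriv (dslope f 0) x‖ ≤ 1 / 2 := by
    intro x hx hx0
    have hfx := (hd.differentiableAt (isOpen_ball.mem_nhds hx)).hasDerivAt
    rw [(hasDerivAt_dslope_of_ne hfx hx0).deriv, hf0, sub_zero, sub_zero, norm_div, norm_pow,
      div_le_iff₀ (by positivity)]
    linarith [norm_mul_deriv_sub_le hf hx]
  have hslope := Complex.norm_sub_le_of_norm_deriv_le_of_ne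
    ((differentiableOn_dslope (ball_mem_nhds 0 one_pos)).2 hd) hderiv hz
  have hfz : f z - z = z * (dslope f 0 z - 1) := by
    have := sub_smul_dslope f 0 z
    simp only [sub_zero, smul_eq_mul, hf0] at this
    rw [← this]; ring
  rw [dslope_same, (hf.1.hasDerivAt_zero_s16 le_rfl).deriv, sub_zero] at hslope
  rw [hfz, norm_mul]
  nlinarith [norm_nonneg z]

end MemOmega

theorem Complex.norm_sub_one_lt_re_of_norm_sub_one_lt_half {u : ℂ} (hu : ‖u - 1‖ < 1 / 2) :
    ‖u - 1‖ < u.re := by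
  have h := abs_le.1 (abs_re_le_norm (u - 1))
  rw [sub_re, one_re] at h
  linarith [h.1]

theorem stmt_16 (f : ℂ → ℂ) (hf : MemOmega 1 f) (z : ℂ) (hz0 : 0 < ‖z‖) (hz : ‖z‖ < 2 / 3) :
    f z ≠ 0 ∧ (z * deriv f z / f z).re > ‖z * deriv f z / f z - 1‖ := by
  have hzD : z ∈ unitDisc := mem_ball_zero_iff.2 (by linarith)
  have hw := hf.norm_mul_deriv_sub_le hzD
  have hfz : ‖z‖ - ‖z‖ ^ 2 / 2 ≤ ‖f z‖ := by
    linarith [norm_sub_norm_le z (f z), norm_sub_rev z (f z), hf.norm_sub_le hzD]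
  have hfpos : 0 < ‖f z‖ := by nlinarith
  have hf0 : f z ≠ 0 := norm_pos_iff.1 hfpos
  refine ⟨hf0, Complex.norm_sub_one_lt_re_of_norm_sub_one_lt_half ?_⟩
  rw [show z * deriv f z / f z - 1 = (z * deriv f z - f z) / f z by field_simp, norm_div,
    div_lt_iff₀ hfpos]
  nlinarith [mul_pos hz0 (sub_pos.2 hz)]
end
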